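/- Let γ > 0 with γ ≠ 1. Define t̃ = (1−γ)T − γσ²/ν₀² and I = [0,T] if t̃ < 0, I = (t̃,T] otherwise. Define on I×(0,∞)×ℝ the function u(t,V,β) = ((e^{r(T−t)}V)^{1−γ}/(1−γ))·exp[(γ/2)log(γg(t)/((γ−1)g(t)+g(T))) + (1/2)log(g(T)/g(t)) + (1/2)((1−γ)/σ²)(1/g(t))·((g(t)−g(T))/((γ−1)g(t)+g(T)))·(β−r)²]. Then u satisfies, on I×(0,∞)×ℝ, the HJB equation −∂_t u − (1/2)σ²g(t)²∂²_{ββ}u − sup_{θ∈ℝ}{((β−r)θ + r)V∂_V u + (1/2)σ²θ²V²∂²_{VV}u + σ²g(t)θV∂²_{Vβ}u} = 0 with terminal condition u(T,V,β) = V^{1−γ}/(1−γ), and the supremum is attained at θ* = ((β−r)/(γσ²))·γg(T)/((γ−1)g(t) + g(T)). -/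

import Mathlib

noncomputable section

open Set

/-- ∂ₜ for a function u(t,V,β). -/
def updt (u : ℝ → ℝ → ℝ → ℝ) (t V β : ℝ) : ℝ := deriv (fun s => u s V β) t
/-- ∂_V for a function u(t,V,β). -/
def updV (u : ℝ → ℝ → ℝ → ℝ) (t V β : ℝ) : ℝ := deriv (fun x => u t x β) V
/-- ∂_β for a function u(t,V,β). -/
def updb (u : ℝ → ℝ → ℝ → ℝ) (t V β : ℝ) : ℝ := deriv (fun y => u t V y) β
/-- ∂²_{VV} for a function u(t,V,β). -/
def updVV (u : ℝ → ℝ → ℝ → ℝ) (t V β : ℝ) : ℝ := deriv (fun x => updV u t x β) V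
/-- ∂²_{ββ} for a function u(t,V,β). -/
def updbb (u : ℝ → ℝ → ℝ → ℝ) (t V β : ℝ) : ℝ := deriv (fun y => updb u t V y) β
/-- ∂²_{Vβ} for a function u(t,V,β). -/
def updVb (u : ℝ → ℝ → ℝ → ℝ) (t V β : ℝ) : ℝ := deriv (fun y => updV u t V y) β

/-- The quantity inside the supremum of the CRRA HJB equation. -/
def hamTheta (σ r gt : ℝ) (u : ℝ → ℝ → ℝ → ℝ) (t V β θ : ℝ) : ℝ :=
  ((β - r) * θ + r) * V * updV u t V β + (1/2) * σ^2 * θ^2 * V^2 * updVV u t V β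
    + σ^2 * gt * θ * V * updVb u t V β

/-!
The value function separates as `u = V^(1-γ)/(1-γ) · exp (A t + B t (β - r)²)`. For such a
`u` the Hamiltonian is `V^(1-γ) exp (A + B (β - r)²)` times a concave quadratic in `θ` with
vertex `θ* = (β - r)(1 + 2σ²gB)/(γσ²)`; substituting `θ*` and dividing by `u` turns the HJB
equation into the Riccati system
`A' = -((1-γ) r + σ²g²B)`, `B' = -(2σ²g²B² + (1-γ)(1 + 2σ²gB)²/(2γσ²))`,
which the explicit `A` and `B` satisfy because `g' = -g²`. On `I` both `g t` and
`(γ-1) g t + g T` are positive, and `1 + 2σ²gB = γ g T/((γ-1) g t + g T)` identifies the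
vertex with the claimed maximiser.
-/

open Real Filter Topology

theorem hasDerivAt_exp_add_mul_sq (a b r y : ℝ) :
    HasDerivAt (fun y => exp (a + b * (y - r) ^ 2))
      (exp (a + b * (y - r) ^ 2) * (2 * b * (y - r))) y := by
  have hsq : HasDerivAt (fun y => (y - r) ^ 2) (2 * (y - r)) y := by
    simpa using ((hasDerivAt_id' y).sub_const r).fun_pow 2
  convert ((hsq.const_mul b).const_add a).exp using 1
  ring

theorem isGreatest_range_of_eq_quadratic {f : ℝ → ℝ} {a b c : ℝ} (ha : a < 0)
    (hf : ∀ x, f x = a * x ^ 2 + b * x + c) : IsGreatest (range f) (f (-b / (2 * a))) := by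
  refine ⟨mem_range_self _, ?_⟩
  rintro _ ⟨x, rfl⟩
  have hgap : f (-b / (2 * a)) - f x = -a * (x + b / (2 * a)) ^ 2 := by
    rw [hf, hf]
    field_simp [ha.ne]
    ring
  have := mul_nonneg (neg_nonneg.2 ha.le) (sq_nonneg (x + b / (2 * a)))
  linarith

theorem hasDerivAt_of_eq_div_affine {g : ℝ → ℝ} {c d t : ℝ}
    (hg : ∀ s, g s = c / (d + c * s)) (ht : d + c * t ≠ 0) : HasDerivAt g (-g t ^ 2) t := by
  have hlin : HasDerivAt (fun s => d + c * s) c t := by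
    simpa using ((hasDerivAt_id t).const_mul c).const_add d
  refine (((hasDerivAt_const t c).fun_div hlin ht).congr_deriv ?_).congr_of_eventuallyEq
    (Eventually.of_forall hg)
  rw [hg]
  field_simp
  ring

theorem lt_and_nonneg_and_le_of_mem_ite {a T t : ℝ}
    (ht : t ∈ if a < 0 then Icc 0 T else Ioc a T) : a < t ∧ 0 ≤ t ∧ t ≤ T := by
  split_ifs at ht with ha
  · exact ⟨ha.trans_le ht.1, ht.1, ht.2⟩
  · exact ⟨ht.1, (not_lt.1 ha).trans ht.1.le, ht.2⟩

namespace CRRA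

section SeparableForm

def HasSeparableForm (γ r : ℝ) (A B : ℝ → ℝ) (u : ℝ → ℝ → ℝ → ℝ) : Prop :=
  ∀ t V β, 0 < V → u t V β = V ^ (1 - γ) / (1 - γ) * exp (A t + B t * (β - r) ^ 2)

variable {u : ℝ → ℝ → ℝ → ℝ} {A B : ℝ → ℝ} {γ r σ gt t V β : ℝ}

theorem HasSeparableForm.updV_eq (hu : HasSeparableForm γ r A B u) (hγ1 : γ ≠ 1) (hV : 0 < V) :
    updV u t V β = V ^ (-γ) * exp (A t + B t * (β - r) ^ 2) := by
  have hloc : (fun x => u t x β) =ᶠ[𝓝 V]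
      fun x => x ^ (1 - γ) / (1 - γ) * exp (A t + B t * (β - r) ^ 2) := by
    filter_upwards [Ioi_mem_nhds hV] with x hx using hu t x β hx
  rw [updV, hloc.deriv_eq,
    (((hasDerivAt_rpow_const (Or.inl hV.ne')).div_const _).mul_const _).deriv,
    sub_sub_cancel_left]
  field_simp [sub_ne_zero.2 hγ1.symm]

theorem HasSeparableForm.updVV_eq (hu : HasSeparableForm γ r A B u) (hγ1 : γ ≠ 1)
    (hV : 0 < V) :
    updVV u t V β = -γ * V ^ (-γ - 1) * exp (A t + B t * (β - r) ^ 2) := by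
  have hloc : (fun x => updV u t x β) =ᶠ[𝓝 V]
      fun x => x ^ (-γ) * exp (A t + B t * (β - r) ^ 2) := by
    filter_upwards [Ioi_mem_nhds hV] with x hx using hu.updV_eq hγ1 hx
  rw [updVV, hloc.deriv_eq, ((hasDerivAt_rpow_const (Or.inl hV.ne')).mul_const _).deriv]

theorem HasSeparableForm.updVb_eq (hu : HasSeparableForm γ r A B u) (hγ1 : γ ≠ 1)
    (hV : 0 < V) :
    updVb u t V β = V ^ (-γ) * exp (A t + B t * (β - r) ^ 2) * (2 * B t * (β - r)) := by
  have hfun : (fun y => updV u t V y) = fun y => V ^ (-γ) * exp (A t + B t * (y - r) ^ 2) :=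
    funext fun _ => hu.updV_eq hγ1 hV
  rw [updVb, hfun, ((hasDerivAt_exp_add_mul_sq _ _ r β).const_mul _).deriv]
  ring

theorem HasSeparableForm.updb_eq (hu : HasSeparableForm γ r A B u) (hV : 0 < V) (y : ℝ) :
    updb u t V y
      = V ^ (1 - γ) / (1 - γ) * exp (A t + B t * (y - r) ^ 2) * (2 * B t * (y - r)) := by
  have hfun : (fun y => u t V y)
      = fun y => V ^ (1 - γ) / (1 - γ) * exp (A t + B t * (y - r) ^ 2) :=
    funext fun y => hu t V y hV
  rw [updb, hfun, ((hasDerivAt_exp_add_mul_sq _ _ r y).const_mul _).deriv]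
  ring

theorem HasSeparableForm.updbb_eq (hu : HasSeparableForm γ r A B u) (hV : 0 < V) :
    updbb u t V β = V ^ (1 - γ) / (1 - γ) * exp (A t + B t * (β - r) ^ 2)
      * ((2 * B t * (β - r)) ^ 2 + 2 * B t) := by
  rw [updbb, funext (hu.updb_eq hV), (((hasDerivAt_exp_add_mul_sq _ _ r β).const_mul _).fun_mul
    (((hasDerivAt_id' β).sub_const r).const_mul (2 * B t))).deriv]
  ring

theorem HasSeparableForm.updt_eq (hu : HasSeparableForm γ r A B u) {a b : ℝ}
    (hA : HasDerivAt A a t) (hB : HasDerivAt B b t) (hV : 0 < V) :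
    updt u t V β = V ^ (1 - γ) / (1 - γ) * exp (A t + B t * (β - r) ^ 2)
      * (a + b * (β - r) ^ 2) := by
  have hfun : (fun s => u s V β)
      = fun s => V ^ (1 - γ) / (1 - γ) * exp (A s + B s * (β - r) ^ 2) :=
    funext fun s => hu s V β hV
  rw [updt, hfun, (((hA.fun_add (hB.mul_const _)).exp).const_mul _).deriv]
  ring

theorem HasSeparableForm.hamTheta_eq (hu : HasSeparableForm γ r A B u) (hγ1 : γ ≠ 1)
    (hV : 0 < V) (θ : ℝ) :
    hamTheta σ r gt u t V β θ = V ^ (1 - γ) * exp (A t + B t * (β - r) ^ 2)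
      * (-(γ * σ ^ 2 / 2) * θ ^ 2 + (β - r) * (1 + 2 * σ ^ 2 * gt * B t) * θ + r) := by
  have h1 : V ^ (1 - γ) = V ^ (-γ) * V := by
    rw [← rpow_add_one hV.ne']; ring_nf
  have h2 : V ^ (-γ) = V ^ (-γ - 1) * V := by
    rw [← rpow_add_one hV.ne']; ring_nf
  rw [hamTheta, hu.updV_eq hγ1 hV, hu.updVV_eq hγ1 hV, hu.updVb_eq hγ1 hV, h1, h2]
  ring

theorem HasSeparableForm.isGreatest_hamTheta (hu : HasSeparableForm γ r A B u) (hγ : 0 < γ)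
    (hγ1 : γ ≠ 1) (hσ : σ ≠ 0) (hV : 0 < V) :
    IsGreatest (range (hamTheta σ r gt u t V β))
      (hamTheta σ r gt u t V β ((β - r) * (1 + 2 * σ ^ 2 * gt * B t) / (γ * σ ^ 2))) := by
  set K := V ^ (1 - γ) * exp (A t + B t * (β - r) ^ 2)
  have hK : 0 < K := mul_pos (rpow_pos_of_pos hV _) (exp_pos _)
  have hconcave : K * -(γ * σ ^ 2 / 2) < 0 := by
    have : 0 < K * (γ * σ ^ 2 / 2) := by positivity
    linarith
  have hquad := isGreatest_range_of_eq_quadratic (f := hamTheta σ r gt u t V β) hconcave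
    (b := K * ((β - r) * (1 + 2 * σ ^ 2 * gt * B t))) (c := K * r)
    (fun θ => by rw [hu.hamTheta_eq hγ1 hV]; ring)
  have hvertex : (β - r) * (1 + 2 * σ ^ 2 * gt * B t) / (γ * σ ^ 2)
      = -(K * ((β - r) * (1 + 2 * σ ^ 2 * gt * B t))) / (2 * (K * -(γ * σ ^ 2 / 2))) := by
    field_simp
  rwa [hvertex]

theorem HasSeparableForm.hjb_residual_eq_zero (hu : HasSeparableForm γ r A B u) (hγ1 : γ ≠ 1)
    (hσ : σ ≠ 0) (hV : 0 < V)
    (hA : HasDerivAt A (-((1 - γ) * r + σ ^ 2 * gt ^ 2 * B t)) t)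
    (hB : HasDerivAt B (-(2 * σ ^ 2 * gt ^ 2 * B t ^ 2
      + (1 - γ) * (1 + 2 * σ ^ 2 * gt * B t) ^ 2 / (2 * γ * σ ^ 2))) t) :
    -updt u t V β - (1 / 2) * σ ^ 2 * gt ^ 2 * updbb u t V β
      - hamTheta σ r gt u t V β ((β - r) * (1 + 2 * σ ^ 2 * gt * B t) / (γ * σ ^ 2)) = 0 := by
  rw [hu.updt_eq hA hB hV, hu.updbb_eq hV, hu.hamTheta_eq hγ1 hV]
  have h1γ : 1 - γ ≠ 0 := sub_ne_zero.2 hγ1.symm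
  field_simp
  ring

end SeparableForm

/-- `t̃` is the zero of the denominator `(γ - 1) g t + g T`. -/
theorem denom_eq {c d γ t T : ℝ} (hc : c ≠ 0) (ht : d + c * t ≠ 0) (hT : d + c * T ≠ 0) :
    (γ - 1) * (c / (d + c * t)) + c / (d + c * T)
      = c ^ 2 * (t - ((1 - γ) * T - γ * d / c)) / ((d + c * t) * (d + c * T)) := by
  field_simp
  ring

def coeffA (T r γ : ℝ) (g : ℝ → ℝ) (t : ℝ) : ℝ :=
  r * (T - t) * (1 - γ) + (γ / 2) * log (γ * g t / ((γ - 1) * g t + g T))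
    + (1 / 2) * log (g T / g t)

def coeffB (T σ γ : ℝ) (g : ℝ → ℝ) (t : ℝ) : ℝ :=
  (1 / 2) * ((1 - γ) / σ ^ 2) * (1 / g t) * ((g t - g T) / ((γ - 1) * g t + g T))

theorem hasSeparableForm_coeff {u : ℝ → ℝ → ℝ → ℝ} {g : ℝ → ℝ} {T r σ γ : ℝ}
    (hu : ∀ t V β : ℝ, u t V β =
      (exp (r * (T - t)) * V) ^ (1 - γ) / (1 - γ)
        * exp ((γ / 2) * log (γ * g t / ((γ - 1) * g t + g T))
            + (1 / 2) * log (g T / g t)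
            + (1 / 2) * ((1 - γ) / σ ^ 2) * (1 / (g t))
                * ((g t - g T) / ((γ - 1) * g t + g T)) * (β - r) ^ 2)) :
    HasSeparableForm γ r (coeffA T r γ g) (coeffB T σ γ g) u := by
  intro t V β hV
  calc u t V β = V ^ (1 - γ) / (1 - γ) * (exp (r * (T - t) * (1 - γ))
        * exp ((γ / 2) * log (γ * g t / ((γ - 1) * g t + g T)) + (1 / 2) * log (g T / g t)
            + (1 / 2) * ((1 - γ) / σ ^ 2) * (1 / (g t))
                * ((g t - g T) / ((γ - 1) * g t + g T)) * (β - r) ^ 2)) := by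
        rw [hu, mul_rpow (exp_pos _).le hV.le, ← exp_mul]
        ring
    _ = _ := by
        rw [← exp_add, coeffA, coeffB]
        congr 2
        ring

section Riccati

variable {g : ℝ → ℝ} {T r σ γ t : ℝ}

theorem one_add_coeffB (hσ : σ ≠ 0) (hgt : g t ≠ 0) (hD : (γ - 1) * g t + g T ≠ 0) :
    1 + 2 * σ ^ 2 * g t * coeffB T σ γ g t = γ * g T / ((γ - 1) * g t + g T) := by
  rw [coeffB]
  set D := (γ - 1) * g t + g T
  field_simp
  ring

theorem hasDerivAt_coeffA (hγ : γ ≠ 0) (hσ : σ ≠ 0) (hgt : g t ≠ 0) (hgT : g T ≠ 0)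
    (hD : (γ - 1) * g t + g T ≠ 0) (hgd : HasDerivAt g (-g t ^ 2) t) :
    HasDerivAt (coeffA T r γ g) (-((1 - γ) * r + σ ^ 2 * g t ^ 2 * coeffB T σ γ g t)) t := by
  have hden : HasDerivAt (fun s => (γ - 1) * g s + g T) ((γ - 1) * -g t ^ 2) t :=
    (hgd.const_mul _).add_const _
  have hlin : HasDerivAt (fun s => r * (T - s) * (1 - γ)) (r * (0 - 1) * (1 - γ)) t :=
    (((hasDerivAt_const t T).fun_sub (hasDerivAt_id' t)).const_mul r).mul_const _
  have hlog1 := (((hgd.const_mul γ).fun_div hden hD).log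
    (div_ne_zero (mul_ne_zero hγ hgt) hD)).const_mul (γ / 2)
  have hlog2 := (((hasDerivAt_const t (g T)).fun_div hgd hgt).log
    (div_ne_zero hgT hgt)).const_mul (1 / 2)
  refine ((hlin.fun_add hlog1).fun_add hlog2).congr_deriv ?_
  rw [coeffB]
  set D := (γ - 1) * g t + g T
  field_simp
  ring

theorem hasDerivAt_coeffB (hσ : σ ≠ 0) (hgt : g t ≠ 0)
    (hD : (γ - 1) * g t + g T ≠ 0) (hgd : HasDerivAt g (-g t ^ 2) t) :
    HasDerivAt (coeffB T σ γ g) (-(2 * σ ^ 2 * g t ^ 2 * coeffB T σ γ g t ^ 2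
      + (1 - γ) * (1 + 2 * σ ^ 2 * g t * coeffB T σ γ g t) ^ 2 / (2 * γ * σ ^ 2))) t := by
  have hden : HasDerivAt (fun s => (γ - 1) * g s + g T) ((γ - 1) * -g t ^ 2) t :=
    (hgd.const_mul _).add_const _
  have hinv := (hasDerivAt_const t (1 : ℝ)).fun_div hgd hgt
  have hrat := (hgd.sub_const (g T)).fun_div hden hD
  refine ((hinv.const_mul ((1 / 2) * ((1 - γ) / σ ^ 2))).fun_mul hrat).congr_deriv ?_
  rw [one_add_coeffB hσ hgt hD, coeffB]
  field_simp
  ring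

end Riccati

end CRRA

theorem stmt8_general
    (T r σ ν₀ γ : ℝ) (hσ : 0 < σ) (hν : 0 < ν₀)
    (hγ : 0 < γ) (hγ1 : γ ≠ 1)
    (g : ℝ → ℝ) (hg : ∀ t, g t = ν₀^2 / (σ^2 + ν₀^2 * t))
    (ttil : ℝ) (httil : ttil = (1-γ) * T - γ * σ^2 / ν₀^2)
    (I : Set ℝ) (hI : I = if ttil < 0 then Icc (0:ℝ) T else Ioc ttil T)
    (u : ℝ → ℝ → ℝ → ℝ)
    (hu : ∀ t V β : ℝ, u t V β =
      (Real.exp (r*(T-t)) * V) ^ (1-γ) / (1-γ)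
        * Real.exp ((γ/2) * Real.log (γ * g t / ((γ-1) * g t + g T))
            + (1/2) * Real.log (g T / g t)
            + (1/2) * ((1-γ)/σ^2) * (1/(g t))
                * ((g t - g T) / ((γ-1) * g t + g T)) * (β - r)^2)) :
    (∀ t ∈ I, ∀ V ∈ Ioi (0:ℝ), ∀ β : ℝ,
      -- the supremum in the HJB equation is attained at θ*
      IsGreatest (Set.range (hamTheta σ r (g t) u t V β))
        (hamTheta σ r (g t) u t V β
          ((β - r)/(γ*σ^2) * (γ * g T / ((γ-1) * g t + g T))))
      ∧
      -- the HJB equation holds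
      -updt u t V β - (1/2) * σ^2 * (g t)^2 * updbb u t V β
        - hamTheta σ r (g t) u t V β
            ((β - r)/(γ*σ^2) * (γ * g T / ((γ-1) * g t + g T))) = 0)
    ∧
    -- terminal condition
    (∀ V ∈ Ioi (0:ℝ), ∀ β : ℝ, u T V β = V ^ (1-γ) / (1-γ)) := by
  refine ⟨fun t ht V hV β => ?_, fun V _ β => ?_⟩
  · obtain ⟨htil, ht0, htT⟩ := lt_and_nonneg_and_le_of_mem_ite (hI ▸ ht)
    have hst : 0 < σ ^ 2 + ν₀ ^ 2 * t := by positivity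
    have hsT : 0 < σ ^ 2 + ν₀ ^ 2 * T := by have := ht0.trans htT; positivity
    have hgt : 0 < g t := by rw [hg]; positivity
    have hgT : 0 < g T := by rw [hg]; positivity
    have hD : 0 < (γ - 1) * g t + g T := by
      rw [hg, hg, CRRA.denom_eq (by positivity) hst.ne' hsT.ne', ← httil]
      have := sub_pos.2 htil
      positivity
    have hgd := hasDerivAt_of_eq_div_affine hg hst.ne'
    have hsep := CRRA.hasSeparableForm_coeff hu
    have hθ : (β - r) / (γ * σ ^ 2) * (γ * g T / ((γ - 1) * g t + g T))
        = (β - r) * (1 + 2 * σ ^ 2 * g t * CRRA.coeffB T σ γ g t) / (γ * σ ^ 2) := by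
      rw [CRRA.one_add_coeffB hσ.ne' hgt.ne' hD.ne']
      ring
    rw [hθ]
    exact ⟨hsep.isGreatest_hamTheta hγ hγ1 hσ.ne' hV,
      hsep.hjb_residual_eq_zero hγ1 hσ.ne' hV
        (CRRA.hasDerivAt_coeffA hγ.ne' hσ.ne' hgt.ne' hgT.ne' hD.ne' hgd)
        (CRRA.hasDerivAt_coeffB hσ.ne' hgt.ne' hD.ne' hgd)⟩
  · rw [hu, show (γ - 1) * g T + g T = γ * g T by ring]
    simp

theorem stmt8
    (T r σ ν₀ γ : ℝ) (hT : 0 < T) (hσ : 0 < σ) (hν : 0 < ν₀)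
    (hγ : 0 < γ) (hγ1 : γ ≠ 1)
    (g : ℝ → ℝ) (hg : ∀ t, g t = ν₀^2 / (σ^2 + ν₀^2 * t))
    (ttil : ℝ) (httil : ttil = (1-γ) * T - γ * σ^2 / ν₀^2)
    (I : Set ℝ) (hI : I = if ttil < 0 then Icc (0:ℝ) T else Ioc ttil T)
    (u : ℝ → ℝ → ℝ → ℝ)
    (hu : ∀ t V β : ℝ, u t V β =
      (Real.exp (r*(T-t)) * V) ^ (1-γ) / (1-γ)
        * Real.exp ((γ/2) * Real.log (γ * g t / ((γ-1) * g t + g T))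
            + (1/2) * Real.log (g T / g t)
            + (1/2) * ((1-γ)/σ^2) * (1/(g t))
                * ((g t - g T) / ((γ-1) * g t + g T)) * (β - r)^2)) :
    (∀ t ∈ I, ∀ V ∈ Ioi (0:ℝ), ∀ β : ℝ,
      -- the supremum in the HJB equation is attained at θ*
      IsGreatest (Set.range (hamTheta σ r (g t) u t V β))
        (hamTheta σ r (g t) u t V β
          ((β - r)/(γ*σ^2) * (γ * g T / ((γ-1) * g t + g T))))
      ∧
      -- the HJB equation holds
      -updt u t V β - (1/2) * σ^2 * (g t)^2 * updbb u t V β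
        - hamTheta σ r (g t) u t V β
            ((β - r)/(γ*σ^2) * (γ * g T / ((γ-1) * g t + g T))) = 0)
    ∧
    -- terminal condition
    (∀ V ∈ Ioi (0:ℝ), ∀ β : ℝ, u T V β = V ^ (1-γ) / (1-γ)) :=
  stmt8_general T r σ ν₀ γ hσ hν hγ hγ1 g hg ttil httil I hI u hu
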